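/- Let 0 < D₂ < D₁ < 1 and let ρ ∈ (−1, 1) satisfy ρ < (2·D₂ − D₁·D₂ − D₁) / (D₁·(1 − D₂)). Define s_u = D₁·D₂·(1 − ρ) / (2·D₂ − D₁·(D₂·(1 − ρ) + ρ + 1)) and s₁ = D₁·s_u / ((1 − D₁)·s_u − D₁). Then s_u > 0, s₁ > 0, and (ρ + 1)·s₁·s_u / ((ρ + 1)·s₁·(s_u + 1) + 2·s_u) = D₂. -/

import Mathlib

/-!
Put `d = 2D₂ − D₁(D₂(1 − ρ) + ρ + 1)` and `e = (ρ + 1)(D₁ − D₂)`; the constraint on `ρ` says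
exactly `d > 0`, and `e > 0` since `D₂ < D₁`. With `a = D₁D₂(1 − ρ)` one has `s_u = a / d` and
`s₁ = a / e`. The two-description distortion is best read through its reciprocal,
`1 + 1/s_u + 2/((ρ + 1)s₁) = 1 + (d + 2(D₁ − D₂))/a`, and `d + 2(D₁ − D₂) = D₁(1 − ρ)(1 − D₂)`
turns this into `1/D₂`.
-/

noncomputable def commonNoise (D₁ D₂ ρ : ℝ) : ℝ :=
  D₁ * D₂ * (1 - ρ) / (2 * D₂ - D₁ * (D₂ * (1 - ρ) + ρ + 1))

/-- The noise variance for which one description alone has distortion `D₁`. -/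
noncomputable def individualNoise (D₁ s_u : ℝ) : ℝ :=
  D₁ * s_u / ((1 - D₁) * s_u - D₁)

noncomputable def pairDistortion (ρ s₁ s_u : ℝ) : ℝ :=
  (ρ + 1) * s₁ * s_u / ((ρ + 1) * s₁ * (s_u + 1) + 2 * s_u)

lemma pairDistortion_inv {ρ s₁ s_u : ℝ} (hρ : ρ + 1 ≠ 0) (hs₁ : s₁ ≠ 0) (hs_u : s_u ≠ 0) :
    (pairDistortion ρ s₁ s_u)⁻¹ = 1 + s_u⁻¹ + 2 / ((ρ + 1) * s₁) := by
  rw [pairDistortion, inv_div]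
  field_simp

lemma commonNoise_denom_pos {D₁ D₂ ρ : ℝ} (hD₁ : 0 < D₁) (hD₂ : D₂ < 1)
    (hρ : ρ < (2 * D₂ - D₁ * D₂ - D₁) / (D₁ * (1 - D₂))) :
    0 < 2 * D₂ - D₁ * (D₂ * (1 - ρ) + ρ + 1) := by
  rw [lt_div_iff₀ (mul_pos hD₁ (sub_pos.2 hD₂))] at hρ
  linarith

lemma individualNoise_commonNoise {D₁ D₂ ρ : ℝ} (hD₁ : D₁ ≠ 0)
    (hd : 2 * D₂ - D₁ * (D₂ * (1 - ρ) + ρ + 1) ≠ 0) :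
    individualNoise D₁ (commonNoise D₁ D₂ ρ) = D₁ * D₂ * (1 - ρ) / ((ρ + 1) * (D₁ - D₂)) := by
  have hden : (1 - D₁) * commonNoise D₁ D₂ ρ - D₁
      = D₁ * ((ρ + 1) * (D₁ - D₂)) / (2 * D₂ - D₁ * (D₂ * (1 - ρ) + ρ + 1)) := by
    rw [commonNoise, eq_div_iff hd, sub_mul, mul_assoc, div_mul_cancel₀ _ hd]
    ring
  rw [individualNoise, hden, commonNoise, mul_div_assoc', div_div_div_cancel_right₀ hd,
    mul_div_mul_left _ _ hD₁]

/-- Three-node Gaussian example: with common-message noise variance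
s_u = D₁·D₂·(1 − ρ)/(2·D₂ − D₁·(D₂·(1 − ρ) + ρ + 1)) and matching s₁, the
two-description distortion equals D₂. -/
theorem stmt_13 (D₁ D₂ ρ : ℝ) (h0 : 0 < D₂) (h1 : D₂ < D₁) (h2 : D₁ < 1)
    (hρ : ρ ∈ Set.Ioo (-1 : ℝ) 1)
    (hρ2 : ρ < (2 * D₂ - D₁ * D₂ - D₁) / (D₁ * (1 - D₂))) :
    0 < D₁ * D₂ * (1 - ρ) / (2 * D₂ - D₁ * (D₂ * (1 - ρ) + ρ + 1)) ∧
    0 < D₁ * (D₁ * D₂ * (1 - ρ) / (2 * D₂ - D₁ * (D₂ * (1 - ρ) + ρ + 1))) /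
        ((1 - D₁) * (D₁ * D₂ * (1 - ρ) / (2 * D₂ - D₁ * (D₂ * (1 - ρ) + ρ + 1))) - D₁) ∧
    (ρ + 1) *
        (D₁ * (D₁ * D₂ * (1 - ρ) / (2 * D₂ - D₁ * (D₂ * (1 - ρ) + ρ + 1))) /
          ((1 - D₁) * (D₁ * D₂ * (1 - ρ) / (2 * D₂ - D₁ * (D₂ * (1 - ρ) + ρ + 1))) - D₁)) *
        (D₁ * D₂ * (1 - ρ) / (2 * D₂ - D₁ * (D₂ * (1 - ρ) + ρ + 1))) /
      ((ρ + 1) *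
          (D₁ * (D₁ * D₂ * (1 - ρ) / (2 * D₂ - D₁ * (D₂ * (1 - ρ) + ρ + 1))) /
            ((1 - D₁) * (D₁ * D₂ * (1 - ρ) / (2 * D₂ - D₁ * (D₂ * (1 - ρ) + ρ + 1))) - D₁)) *
          (D₁ * D₂ * (1 - ρ) / (2 * D₂ - D₁ * (D₂ * (1 - ρ) + ρ + 1)) + 1)
        + 2 * (D₁ * D₂ * (1 - ρ) / (2 * D₂ - D₁ * (D₂ * (1 - ρ) + ρ + 1)))) = D₂ := by
  obtain ⟨hρ_gt, hρ_lt⟩ := hρ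
  have hD₁ : 0 < D₁ := h0.trans h1
  have hd := commonNoise_denom_pos hD₁ (h1.trans h2) hρ2
  have ha : 0 < D₁ * D₂ * (1 - ρ) := mul_pos (mul_pos hD₁ h0) (sub_pos.2 hρ_lt)
  have hρ₁ : 0 < ρ + 1 := by linarith
  have he : 0 < (ρ + 1) * (D₁ - D₂) := mul_pos hρ₁ (sub_pos.2 h1)
  have hs_u : 0 < commonNoise D₁ D₂ ρ := div_pos ha hd
  have hs₁ := individualNoise_commonNoise hD₁.ne' hd.ne'
  have hs₁_pos : 0 < individualNoise D₁ (commonNoise D₁ D₂ ρ) := hs₁ ▸ div_pos ha he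
  refine ⟨hs_u, hs₁_pos, ?_⟩
  change pairDistortion ρ (individualNoise D₁ (commonNoise D₁ D₂ ρ)) (commonNoise D₁ D₂ ρ) = D₂
  rw [← inv_inj, pairDistortion_inv hρ₁.ne' hs₁_pos.ne' hs_u.ne', hs₁, commonNoise]
  field_simp
  ring
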